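/- Let α > −1 and a ∈ ℝ∖{0}. Let h be the monic Hermite polynomials and ℓ^{(α)} the monic Laguerre orthogonal polynomial sequence, and for n ≥ 0 define the 2×2 matrix polynomial Qₙ(x) = [[hₙ(x), a(ℓₙ₊₁^{(α)}(x) − x·hₙ(x))], [−a·n·(2^{n−1}/√π)·Γ(n+α+1)·hₙ₋₁(x), a²·n·(2^{n−1}/√π)·Γ(n+α+1)·x·hₙ₋₁(x) + ℓₙ^{(α)}(x)]] (for n = 0 the terms with factor n vanish). Then for all n ≥ 0 and all x: Qₙ''(x)·[[1, 2ax²−ax], [0, 2x]] + Qₙ'(x)·[[−2x, 2ax(α+3)], [0, 2(α+1−x)]] + Qₙ(x)·[[−2, 2a(α+1)], [0, 0]] = [[−2n−2, 0], [0, −2n]]·Qₙ(x). -/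

import Mathlib

/-!
The monic Hermite and Laguerre polynomials are eigenfunctions of the second-order operators
`p'' - 2xp'` and `xp'' + (α + 1 - x)p'`. Integration by parts against the weight shows that
each operator is symmetric for the corresponding inner product, and a direct coefficient
computation shows that it preserves degrees, acting on the top coefficient of a degree-`n`
polynomial by `-2n` resp. `-n`. For a monic orthogonal sequence this forces `D pₙ = λₙ pₙ`:
`D pₙ - λₙ pₙ` has degree `< n` and, by symmetry, is orthogonal to every lower `pₘ`.
Each entry of the matrix identity is then a linear combination of these scalar equations.
-/

open MeasureTheory Matrix Polynomial Real

noncomputable section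

/-- The 2×2 Hermite–Laguerre-type matrix orthogonal polynomials built from the
monic Hermite polynomials `h` and the monic Laguerre polynomials `ℓ^{(α)}` (for
`n = 0` the terms with factor `n` vanish). -/
def QHL (α a : ℝ) (h ℓ : ℕ → Polynomial ℝ) (n : ℕ) (x : ℝ) :
    Matrix (Fin 2) (Fin 2) ℝ :=
  !![(h n).eval x,
     a * ((ℓ (n + 1)).eval x - x * (h n).eval x);
     -(a * (n : ℝ) * ((2 : ℝ) ^ (n - 1) / Real.sqrt π) *
        Real.Gamma ((n : ℝ) + α + 1) * (h (n - 1)).eval x),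
     a ^ 2 * (n : ℝ) * ((2 : ℝ) ^ (n - 1) / Real.sqrt π) *
        Real.Gamma ((n : ℝ) + α + 1) * x * (h (n - 1)).eval x + (ℓ n).eval x]

open Set

namespace Polynomial.Sequence

def ofMonic {R : Type*} [Semiring R] [Nontrivial R] (f : ℕ → R[X]) (hmonic : ∀ n, (f n).Monic)
    (hdeg : ∀ n, (f n).natDegree = n) : Sequence R where
  elems' := f
  degree_eq' n := by rw [degree_eq_natDegree (hmonic n).ne_zero, hdeg]

@[simp]
theorem ofMonic_apply {R : Type*} [Semiring R] [Nontrivial R] (f : ℕ → R[X])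
    (hmonic : ∀ n, (f n).Monic) (hdeg : ∀ n, (f n).natDegree = n) (n : ℕ) :
    ofMonic f hmonic hdeg n = f n := rfl

variable {K : Type*} [Field K] (L : K[X] →ₗ[K] K) (S : Sequence K)

theorem map_mul_eq_zero_of_degree_lt {g : K[X]} {n : ℕ} (hg : ∀ m < n, L (S m * g) = 0)
    {s : K[X]} (hs : s.degree < n) : L (s * g) = 0 := by
  have hspan : s ∈ Submodule.span K (S '' Iio n) := by
    rw [S.span_degreeLT fun i _ => (leadingCoeff_ne_zero.mpr (S.ne_zero i)).isUnit,
      mem_degreeLT]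
    exact hs
  have hle : Submodule.span K (S '' Iio n) ≤ LinearMap.ker (L ∘ₗ LinearMap.mulRight K g) := by
    rw [Submodule.span_le]
    rintro _ ⟨m, hm, rfl⟩
    exact hg m hm
  exact hle hspan

theorem eq_smul_of_isSymmetric (hL : ∀ r, L (r * r) = 0 → r = 0)
    (horth : ∀ n m, n ≠ m → L (S n * S m) = 0)
    (D : K[X] → K[X]) (hsymm : ∀ p q, L (D p * q) = L (p * D q))
    (eigenvalue : ℕ → K)
    (hD : ∀ n p, p.natDegree ≤ n → (D p - eigenvalue n • p).degree < n)
    (n : ℕ) : D (S n) = eigenvalue n • S n := by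
  set r := D (S n) - eigenvalue n • S n
  have hr : r.degree < n := hD n (S n) (S.natDegree_eq n).le
  have hDS : ∀ m < n, (D (S m)).degree < n := fun m hm => by
    have hle : (D (S m)).degree ≤ m := by
      rw [← sub_add_cancel (D (S m)) (eigenvalue m • S m)]
      exact (degree_add_le _ _).trans (max_le (hD m (S m) (S.natDegree_eq m).le).le
        ((degree_smul_le _ _).trans (S.degree_eq m).le))
    exact hle.trans_lt (by exact_mod_cast hm)
  have hperp : ∀ m < n, L (S m * r) = 0 := fun m hm => by
    have := map_mul_eq_zero_of_degree_lt L S (fun k hk => horth k n hk.ne) (hDS m hm)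
    rw [mul_sub, map_sub, mul_smul_comm, map_smul, mul_comm, hsymm, horth m n hm.ne,
      smul_zero, sub_zero, mul_comm, this]
  exact sub_eq_zero.mp (hL r (map_mul_eq_zero_of_degree_lt L S hperp hr))

end Polynomial.Sequence

namespace Polynomial

section WeightedIntegral

variable (μ : Measure ℝ) (w : ℝ → ℝ)
  (hw : ∀ p : ℝ[X], Integrable (fun x => p.eval x * w x) μ)

def weightedIntegral : ℝ[X] →ₗ[ℝ] ℝ where
  toFun p := ∫ x, p.eval x * w x ∂μ
  map_add' p q := by simp only [eval_add, add_mul]; exact integral_add (hw p) (hw q)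
  map_smul' c p := by
    simp only [eval_smul, smul_eq_mul, mul_assoc, integral_const_mul, RingHom.id_apply]

theorem weightedIntegral_apply (p : ℝ[X]) :
    weightedIntegral μ w hw p = ∫ x, p.eval x * w x ∂μ := rfl

theorem eq_zero_of_weightedIntegral_mul_self_eq_zero [NullSingletonClass μ] (hμ : μ ≠ 0)
    (hpos : ∀ᵐ x ∂μ, 0 < w x) {r : ℝ[X]} (hr : weightedIntegral μ w hw (r * r) = 0) :
    r = 0 := by
  by_contra hr0
  have hnonneg : 0 ≤ᵐ[μ] fun x => (r * r).eval x * w x := by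
    filter_upwards [hpos] with x hx
    simpa only [eval_mul, Pi.zero_apply] using mul_nonneg (mul_self_nonneg _) hx.le
  have hroot : ∀ᵐ x ∂μ, r.eval x = 0 := by
    filter_upwards [(integral_eq_zero_iff_of_nonneg_ae hnonneg (hw _)).mp hr, hpos]
      with x hx hwx
    simpa only [eval_mul, Pi.zero_apply, mul_eq_zero, hwx.ne', or_false, or_self] using hx
  have hfin : {x | r.eval x = 0}.Finite := by
    simpa [IsRoot] using finite_setOfPred_isRoot hr0
  have hnonroot : ∀ᵐ x ∂μ, r.eval x ≠ 0 := ae_iff.mpr (by simpa using hfin.measure_zero μ)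
  exact hμ (ae_eq_bot.mp (Filter.eventually_false_iff_eq_bot.mp
    (hroot.and hnonroot |>.mono fun x hx => hx.2 hx.1)))

end WeightedIntegral

section Operators

variable {R : Type*} [CommRing R]

def hermiteOperator (p : R[X]) : R[X] :=
  derivative (derivative p) - 2 * X * derivative p

def laguerreOperator (α : R) (p : R[X]) : R[X] :=
  X * derivative (derivative p) + (C (α + 1) - X) * derivative p

theorem coeff_X_mul_derivative (p : R[X]) (m : ℕ) :
    (X * derivative p).coeff m = p.coeff m * m := by
  cases m with
  | zero => simp
  | succ k => rw [coeff_X_mul, coeff_derivative, Nat.cast_succ]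

theorem coeff_derivative_eq_zero_of_natDegree_le {p : R[X]} {n m : ℕ} (hp : p.natDegree ≤ n)
    (hm : n ≤ m) : (derivative p).coeff m = 0 := by
  rw [coeff_derivative, coeff_eq_zero_of_natDegree_lt (by omega), zero_mul]

theorem coeff_mul_natCast_sub_eq_zero {p : R[X]} {n m : ℕ} (hp : p.natDegree ≤ n)
    (hm : n ≤ m) : p.coeff m * ((n : R) - m) = 0 := by
  rcases hm.eq_or_lt with rfl | hlt
  · simp
  · simp [coeff_eq_zero_of_natDegree_lt (hp.trans_lt hlt)]

theorem degree_hermiteOperator_sub_lt {p : R[X]} {n : ℕ} (hp : p.natDegree ≤ n) :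
    (hermiteOperator p - (-2 * n : R) • p).degree < n := by
  rw [degree_lt_iff_coeff_zero]
  intro m hm
  simp only [hermiteOperator, coeff_sub, coeff_smul, mul_assoc, coeff_ofNat_mul,
    coeff_X_mul_derivative, coeff_derivative_eq_zero_of_natDegree_le
      (natDegree_derivative_le p |>.trans (Nat.sub_le _ _) |>.trans hp) hm, smul_eq_mul]
  linear_combination 2 * coeff_mul_natCast_sub_eq_zero hp hm

theorem degree_laguerreOperator_sub_lt (α : R) {p : R[X]} {n : ℕ} (hp : p.natDegree ≤ n) :
    (laguerreOperator α p - (-n : R) • p).degree < n := by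
  rw [degree_lt_iff_coeff_zero]
  intro m hm
  simp only [laguerreOperator, coeff_sub, coeff_add, coeff_smul, sub_mul, coeff_C_mul,
    coeff_X_mul_derivative, coeff_derivative_eq_zero_of_natDegree_le hp hm, smul_eq_mul]
  linear_combination coeff_mul_natCast_sub_eq_zero hp hm

end Operators

theorem integrable_eval_mul_exp_neg_sq (p : ℝ[X]) :
    Integrable (fun x => p.eval x * exp (-x ^ 2)) := by
  induction p using Polynomial.induction_on' with
  | add p q hp hq => simp only [eval_add, add_mul]; exact hp.add hq
  | monomial i c =>
    have hi : Integrable (fun x : ℝ => x ^ (i : ℝ) * exp (-1 * x ^ 2)) :=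
      integrable_rpow_mul_exp_neg_mul_sq one_pos (by linarith [Nat.cast_nonneg (α := ℝ) i])
    simpa only [eval_monomial, rpow_natCast, neg_one_mul, mul_assoc] using hi.const_mul c

theorem integrableOn_eval_mul_exp_neg_mul_rpow {α : ℝ} (hα : -1 < α) (p : ℝ[X]) :
    IntegrableOn (fun x => p.eval x * (exp (-x) * x ^ α)) (Ioi 0) := by
  induction p using Polynomial.induction_on' with
  | add p q hp hq => simp only [eval_add, add_mul]; exact hp.add hq
  | monomial i c =>
    have hi : IntegrableOn (fun x => c * (exp (-x) * x ^ (α + i + 1 - 1))) (Ioi 0) :=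
      (GammaIntegral_convergent (by linarith [Nat.cast_nonneg (α := ℝ) i])).const_mul c
    refine hi.congr_fun (fun x (hx : 0 < x) => ?_) measurableSet_Ioi
    simp only [eval_monomial, add_sub_cancel_right, rpow_add hx, rpow_natCast]
    ring

abbrev hermiteFunctional : ℝ[X] →ₗ[ℝ] ℝ :=
  weightedIntegral volume (fun x => exp (-x ^ 2)) integrable_eval_mul_exp_neg_sq

abbrev laguerreFunctional {α : ℝ} (hα : -1 < α) : ℝ[X] →ₗ[ℝ] ℝ :=
  weightedIntegral (volume.restrict (Ioi 0)) (fun x => exp (-x) * x ^ α)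
    fun p => (integrableOn_eval_mul_exp_neg_mul_rpow hα p).integrable

theorem hermiteFunctional_hermiteOperator_mul (p q : ℝ[X]) :
    hermiteFunctional (hermiteOperator p * q)
      = -hermiteFunctional (derivative p * derivative q) := by
  have hderiv : ∀ x, HasDerivAt (fun y => (derivative p * q).eval y * exp (-y ^ 2))
      ((hermiteOperator p * q + derivative p * derivative q).eval x * exp (-x ^ 2)) x := by
    intro x
    have hexp : HasDerivAt (fun y => exp (-y ^ 2)) (exp (-x ^ 2) * -(2 * x)) x := by
      simpa using ((hasDerivAt_pow 2 x).neg).exp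
    refine (((derivative p * q).hasDerivAt x).mul hexp).congr_deriv ?_
    simp only [hermiteOperator, derivative_mul, eval_add, eval_mul, eval_sub, eval_ofNat, eval_X]
    ring
  have : hermiteFunctional (hermiteOperator p * q + derivative p * derivative q) = 0 :=
    integral_eq_zero_of_hasDerivAt_of_integrable hderiv
      (integrable_eval_mul_exp_neg_sq _) (integrable_eval_mul_exp_neg_sq _)
  rw [map_add] at this
  linear_combination this

theorem laguerreFunctional_laguerreOperator_mul {α : ℝ} (hα : -1 < α) (p q : ℝ[X]) :
    laguerreFunctional hα (laguerreOperator α p * q)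
      = -laguerreFunctional hα (X * derivative p * derivative q) := by
  set F : ℝ → ℝ := fun y => y ^ (α + 1) * (exp (-y) * (derivative p * q).eval y)
  have hderiv : ∀ x ∈ Ioi (0 : ℝ), HasDerivAt F
      ((laguerreOperator α p * q + X * derivative p * derivative q).eval x
        * (exp (-x) * x ^ α)) x := by
    intro x (hx : 0 < x)
    have hpow : HasDerivAt (fun y : ℝ => y ^ (α + 1)) ((α + 1) * x ^ α) x := by
      simpa using hasDerivAt_rpow_const (p := α + 1) (Or.inl hx.ne')
    have hexp : HasDerivAt (fun y : ℝ => exp (-y)) (-exp (-x)) x := by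
      simpa using (hasDerivAt_neg x).exp
    refine (hpow.mul (hexp.mul ((derivative p * q).hasDerivAt x))).congr_deriv ?_
    rw [rpow_add_one hx.ne']
    simp only [laguerreOperator, derivative_mul, eval_add, eval_mul, eval_sub, eval_C, eval_X,
      Pi.mul_apply]
    ring
  -- `F` is `X p' q` against the weight, so it is integrable and hence tends to `0` at `∞`.
  have hF : IntegrableOn F (Ioi 0) := by
    refine (integrableOn_eval_mul_exp_neg_mul_rpow hα (X * derivative p * q)).congr_fun
      (fun x (hx : 0 < x) => ?_) measurableSet_Ioi
    simp only [F, rpow_add_one hx.ne', eval_mul, eval_X]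
    ring
  have hcont : ContinuousWithinAt F (Ici 0) 0 :=
    ((continuousAt_rpow_const 0 (α + 1) (Or.inr (by linarith))).mul
      (by fun_prop)).continuousWithinAt
  have : laguerreFunctional hα (laguerreOperator α p * q + X * derivative p * derivative q)
      = 0 - F 0 :=
    integral_Ioi_of_hasDerivAt_of_tendsto hcont hderiv
      (integrableOn_eval_mul_exp_neg_mul_rpow hα _)
      (tendsto_zero_of_hasDerivAt_of_integrableOn_Ioi hderiv
        (integrableOn_eval_mul_exp_neg_mul_rpow hα _) hF)
  rw [map_add] at this
  simp only [F, zero_rpow (show α + 1 ≠ 0 by linarith), zero_mul, sub_zero] at this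
  linear_combination this

theorem hermiteOperator_eq_of_orthogonal (h : ℕ → ℝ[X]) (hmonic : ∀ n, (h n).Monic)
    (hdeg : ∀ n, (h n).natDegree = n)
    (horth : ∀ n m : ℕ, n ≠ m → ∫ x : ℝ, (h n).eval x * (h m).eval x * exp (-x ^ 2) = 0)
    (n : ℕ) : hermiteOperator (h n) = (-2 * n : ℝ) • h n := by
  refine (Sequence.ofMonic h hmonic hdeg).eq_smul_of_isSymmetric hermiteFunctional
    (fun r => eq_zero_of_weightedIntegral_mul_self_eq_zero _ _ _ (NeZero.ne _)
      (ae_of_all _ fun x => exp_pos _)) (fun n m hnm => ?_) hermiteOperator (fun p q => ?_)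
    (fun n => -2 * n) (fun n p hp => degree_hermiteOperator_sub_lt hp) n
  · simpa only [Sequence.ofMonic_apply, weightedIntegral_apply, eval_mul] using horth n m hnm
  · rw [hermiteFunctional_hermiteOperator_mul, mul_comm p, hermiteFunctional_hermiteOperator_mul,
      mul_comm]

theorem laguerreOperator_eq_of_orthogonal {α : ℝ} (hα : -1 < α) (ℓ : ℕ → ℝ[X])
    (hmonic : ∀ n, (ℓ n).Monic) (hdeg : ∀ n, (ℓ n).natDegree = n)
    (horth : ∀ n m : ℕ, n ≠ m →
      ∫ x in Ioi (0 : ℝ), (ℓ n).eval x * (ℓ m).eval x * (exp (-x) * x ^ α) = 0)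
    (n : ℕ) : laguerreOperator α (ℓ n) = (-n : ℝ) • ℓ n := by
  have hμ : volume.restrict (Ioi (0 : ℝ)) ≠ 0 := by simp [Measure.restrict_eq_zero]
  have hpos : ∀ᵐ x ∂volume.restrict (Ioi (0 : ℝ)), 0 < exp (-x) * x ^ α :=
    (ae_restrict_iff' measurableSet_Ioi).mpr
      (ae_of_all _ fun x hx => mul_pos (exp_pos _) (rpow_pos_of_pos hx _))
  refine (Sequence.ofMonic ℓ hmonic hdeg).eq_smul_of_isSymmetric (laguerreFunctional hα)
    (fun r => eq_zero_of_weightedIntegral_mul_self_eq_zero _ _ _ hμ hpos) (fun n m hnm => ?_)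
    (laguerreOperator α) (fun p q => ?_) (fun n => -n)
    (fun n p hp => degree_laguerreOperator_sub_lt α hp) n
  · simpa only [Sequence.ofMonic_apply, weightedIntegral_apply, eval_mul] using horth n m hnm
  · rw [laguerreFunctional_laguerreOperator_mul, mul_comm p,
      laguerreFunctional_laguerreOperator_mul, mul_right_comm]

end Polynomial

def QHLPolynomial (α a : ℝ) (h ℓ : ℕ → ℝ[X]) (n : ℕ) : Matrix (Fin 2) (Fin 2) ℝ[X] :=
  let κ : ℝ := (2 : ℝ) ^ (n - 1) / √π * Gamma (n + α + 1)
  !![h n, C a * (ℓ (n + 1) - X * h n);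
     C (-(a * n * κ)) * h (n - 1), C (a ^ 2 * n * κ) * X * h (n - 1) + ℓ n]

theorem QHL_apply (α a : ℝ) (h ℓ : ℕ → ℝ[X]) (n : ℕ) (x : ℝ) (i j : Fin 2) :
    QHL α a h ℓ n x i j = (QHLPolynomial α a h ℓ n i j).eval x := by
  fin_cases i <;> fin_cases j <;>
    simp only [QHL, QHLPolynomial, Fin.zero_eta, Fin.mk_one, Fin.isValue, of_apply, cons_val',
      cons_val_zero, cons_val_one, cons_val_fin_one, eval_mul, eval_C, eval_X, eval_add,
      eval_sub] <;>
    ring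

theorem QHL_eigenfunction_general
    (α : ℝ) (hα : -1 < α) (a : ℝ)
    (h ℓ : ℕ → Polynomial ℝ)
    (hhmonic : ∀ n, (h n).Monic) (hhdeg : ∀ n, (h n).natDegree = n)
    (hhorth : ∀ n m : ℕ, n ≠ m →
      ∫ x : ℝ, (h n).eval x * (h m).eval x * Real.exp (-x ^ 2) = 0)
    (hlmonic : ∀ n, (ℓ n).Monic) (hldeg : ∀ n, (ℓ n).natDegree = n)
    (hlorth : ∀ n m : ℕ, n ≠ m →
      ∫ x in Set.Ioi (0 : ℝ),
        (ℓ n).eval x * (ℓ m).eval x * (Real.exp (-x) * x ^ α) = 0) :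
    ∀ (n : ℕ) (x : ℝ),
      (Matrix.of fun i j : Fin 2 =>
          deriv (fun y => deriv (fun z => QHL α a h ℓ n z i j) y) x) *
          !![1, 2 * a * x ^ 2 - a * x; 0, 2 * x]
      + (Matrix.of fun i j : Fin 2 =>
          deriv (fun y => QHL α a h ℓ n y i j) x) *
          !![-2 * x, 2 * a * x * (α + 3); 0, 2 * (α + 1 - x)]
      + QHL α a h ℓ n x * !![-2, 2 * a * (α + 1); 0, 0]
      = !![-2 * (n : ℝ) - 2, 0; 0, -2 * (n : ℝ)] * QHL α a h ℓ n x := by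
  intro n x
  have hH (k : ℕ) : (derivative (derivative (h k))).eval x - 2 * x * (derivative (h k)).eval x
      = -2 * k * (h k).eval x := by
    simpa [hermiteOperator] using
      congrArg (eval x) (hermiteOperator_eq_of_orthogonal h hhmonic hhdeg hhorth k)
  have hL (k : ℕ) : x * (derivative (derivative (ℓ k))).eval x
      + (α + 1 - x) * (derivative (ℓ k)).eval x = -k * (ℓ k).eval x := by
    simpa [laguerreOperator] using
      congrArg (eval x) (laguerreOperator_eq_of_orthogonal hα ℓ hlmonic hldeg hlorth k)
  -- The equation for `h (n - 1)`, scaled by `n` so that it also holds when `n - 1` truncates.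
  have hHpred : (n : ℝ) * ((derivative (derivative (h (n - 1)))).eval x
      - 2 * x * (derivative (h (n - 1))).eval x + 2 * (n - 1) * (h (n - 1)).eval x) = 0 := by
    cases n with
    | zero => simp
    | succ k => push_cast; linear_combination (k + 1 : ℝ) * hH k
  have hLsucc := hL (n + 1)
  push_cast at hLsucc
  set κ : ℝ := (2 : ℝ) ^ (n - 1) / √π * Gamma (n + α + 1)
  ext i j
  simp only [Matrix.add_apply, Matrix.mul_apply, Fin.sum_univ_two, Matrix.of_apply, QHL_apply,
    Polynomial.deriv]
  fin_cases i <;> fin_cases j <;>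
    simp only [QHLPolynomial, Fin.zero_eta, Fin.mk_one, Fin.isValue, of_apply, cons_val',
      cons_val_zero, cons_val_one, cons_val_fin_one, derivative_mul, derivative_add,
      derivative_sub, derivative_C, derivative_X, eval_mul, eval_C, eval_X, eval_add, eval_sub,
      zero_mul, mul_zero, zero_add, add_zero, one_mul, mul_one]
  · linear_combination hH n
  · linear_combination -a * x * hH n + 2 * a * hLsucc
  · linear_combination -a * κ * hHpred
  · linear_combination a ^ 2 * κ * x * hHpred + 2 * hL n

/-- The 2×2 Hermite–Laguerre-type polynomials `Qₙ` are eigenfunctions of the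
second-order differential operator
`D = ∂² [[1, 2ax²−ax], [0, 2x]] + ∂ [[−2x, 2ax(α+3)], [0, 2(α+1−x)]]
      + [[−2, 2a(α+1)], [0, 0]]`
with eigenvalue `diag(−2n−2, −2n)`. -/
theorem QHL_eigenfunction
    (α : ℝ) (hα : -1 < α) (a : ℝ) (ha : a ≠ 0)
    (h ℓ : ℕ → Polynomial ℝ)
    (hhmonic : ∀ n, (h n).Monic) (hhdeg : ∀ n, (h n).natDegree = n)
    (hhorth : ∀ n m : ℕ, n ≠ m →
      ∫ x : ℝ, (h n).eval x * (h m).eval x * Real.exp (-x ^ 2) = 0)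
    (hlmonic : ∀ n, (ℓ n).Monic) (hldeg : ∀ n, (ℓ n).natDegree = n)
    (hlorth : ∀ n m : ℕ, n ≠ m →
      ∫ x in Set.Ioi (0 : ℝ),
        (ℓ n).eval x * (ℓ m).eval x * (Real.exp (-x) * x ^ α) = 0) :
    ∀ (n : ℕ) (x : ℝ),
      (Matrix.of fun i j : Fin 2 =>
          deriv (fun y => deriv (fun z => QHL α a h ℓ n z i j) y) x) *
          !![1, 2 * a * x ^ 2 - a * x; 0, 2 * x]
      + (Matrix.of fun i j : Fin 2 =>
          deriv (fun y => QHL α a h ℓ n y i j) x) *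
          !![-2 * x, 2 * a * x * (α + 3); 0, 2 * (α + 1 - x)]
      + QHL α a h ℓ n x * !![-2, 2 * a * (α + 1); 0, 0]
      = !![-2 * (n : ℝ) - 2, 0; 0, -2 * (n : ℝ)] * QHL α a h ℓ n x :=
  QHL_eigenfunction_general α hα a h ℓ hhmonic hhdeg hhorth hlmonic hldeg hlorth

end
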